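/- In the Kashiwara-type algebra K_q with \gamma = 1, the relation \Omega_\psi(k) x^-_m = \delta_{k,-m} + \sum_{r \ge 0} g_{q^{-1}}(r) x^-_{m+r} \Omega_\psi(k-r) implies the finite relation q^2 \Omega_\psi(m) x^-_{n+1} - \Omega_\psi(m+1) x^-_n = (q^2 - 1) \delta_{m, -n-1} + x^-_{n+1} \Omega_\psi(m) - q^2 x^-_n \Omega_\psi(m+1) for all integers m, n. -/
import Mathlib


/- STATEMENT 14: In the Kashiwara-type algebra K_q with γ = 1, realized as operators on
a module V, the locally finite relation
  Ω_ψ(k) x⁻_m = δ_{k,-m} + ∑_{r ≥ 0} g(r) x⁻_{m+r} Ω_ψ(k-r)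
(with g(0) = q², g(r) = (q⁴-1)q^{2(r-1)} for r > 0) implies the finite relation
  q² Ω_ψ(m) x⁻_{n+1} - Ω_ψ(m+1) x⁻_n
    = (q²-1) δ_{m,-n-1} + x⁻_{n+1} Ω_ψ(m) - q² x⁻_n Ω_ψ(m+1)  for all m, n ∈ ℤ. -/
theorem stmt14 (K : Type*) [Field K] (q : K) (hq : q ≠ 0)
    (V : Type*) [AddCommGroup V] [Module K V]
    (g : ℕ → K) (hg0 : g 0 = q ^ 2)
    (hgr : ∀ r : ℕ, 0 < r → g r = (q ^ 4 - 1) * q ^ (2 * (r - 1)))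
    (x Ω : ℤ → V →ₗ[K] V)
    (hfin : ∀ (k m : ℤ) (v : V),
      (Function.support fun r : ℕ => g r • (x (m + r) ((Ω (k - r)) v))).Finite)
    (hcomm : ∀ (k m : ℤ) (v : V),
      Ω k (x m v) = (if k = -m then v else 0) +
        ∑ᶠ r : ℕ, g r • (x (m + r) (Ω (k - r) v))) :
    ∀ (m n : ℤ) (v : V),
      (q ^ 2) • Ω m (x (n + 1) v) - Ω (m + 1) (x n v) =
        (q ^ 2 - 1) • (if m = -n - 1 then v else 0) +
          x (n + 1) (Ω m v) - (q ^ 2) • x n (Ω (m + 1) v) := by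
  intro m n v
  have hA := hfin m (n + 1) v
  have hB := hfin (m + 1) n v
  obtain ⟨N, hN⟩ := ((hA.union hB).image id).bddAbove
  have hAz : ∀ r : ℕ, N < r → g r • x ((n + 1) + (r : ℤ)) (Ω (m - r) v) = 0 := by
    intro r hr
    by_contra h
    exact absurd (hN ⟨r, Set.mem_union_left _ h, rfl⟩) (not_le.2 hr)
  have hBz : ∀ r : ℕ, N < r → g r • x (n + (r : ℤ)) (Ω ((m + 1) - r) v) = 0 := by
    intro r hr
    by_contra h
    exact absurd (hN ⟨r, Set.mem_union_right _ h, rfl⟩) (not_le.2 hr)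
  have hAsub : (Function.support fun r : ℕ => g r • x ((n + 1) + (r : ℤ)) (Ω (m - r) v))
      ⊆ (Finset.range (N + 2) : Finset ℕ) := by
    intro r hr
    simp only [Finset.coe_range, Set.mem_Iio]
    by_contra h
    exact hr (hAz r (by omega))
  have hBsub : (Function.support fun r : ℕ => g r • x (n + (r : ℤ)) (Ω ((m + 1) - r) v))
      ⊆ (Finset.range (N + 2) : Finset ℕ) := by
    intro r hr
    simp only [Finset.coe_range, Set.mem_Iio]
    by_contra h
    exact hr (hBz r (by omega))
  rw [hcomm m (n + 1) v, hcomm (m + 1) n v,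
    finsum_eq_sum_of_support_subset _ hAsub, finsum_eq_sum_of_support_subset _ hBsub]
  -- peel terms
  have hBpeel : ∑ r ∈ Finset.range (N + 2), g r • x (n + (r : ℤ)) (Ω ((m + 1) - r) v)
      = (∑ r ∈ Finset.range (N + 1), g (r + 1) • x (n + ((r : ℤ) + 1)) (Ω ((m + 1) - ((r : ℤ) + 1)) v))
        + g 0 • x (n + (0 : ℕ)) (Ω ((m + 1) - (0 : ℕ)) v) := by
    rw [Finset.sum_range_succ' (fun r : ℕ => g r • x (n + (r : ℤ)) (Ω ((m + 1) - r) v)) (N + 1)]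
    push_cast
    rfl
  have hApeel : (q ^ 2) • ∑ r ∈ Finset.range (N + 2), g r • x ((n + 1) + (r : ℤ)) (Ω (m - r) v)
      = ∑ r ∈ Finset.range (N + 1), (q ^ 2) • (g r • x ((n + 1) + (r : ℤ)) (Ω (m - r) v)) := by
    rw [Finset.smul_sum, Finset.sum_range_succ]
    rw [hAz (N + 1) (by omega)]
    simp
  rw [smul_add, hApeel, hBpeel]
  have key : ∑ r ∈ Finset.range (N + 1),
        ((q ^ 2) • (g r • x ((n + 1) + (r : ℤ)) (Ω (m - r) v))
          - g (r + 1) • x (n + ((r : ℤ) + 1)) (Ω ((m + 1) - ((r : ℤ) + 1)) v))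
      = x (n + 1) (Ω m v) := by
    rw [Finset.sum_eq_single_of_mem 0 (Finset.mem_range.2 (by omega))]
    · have h1 : g 1 = q ^ 4 - 1 := by
        rw [hgr 1 one_pos]; norm_num
      simp only [Nat.cast_zero, add_zero, zero_add, sub_zero, smul_smul, hg0, h1]
      have : ((m : ℤ) + 1 - 1) = m := by ring
      rw [this]
      have : q ^ 2 * q ^ 2 = (q ^ 4 - 1) + 1 := by ring
      rw [this, add_smul, sub_smul, one_smul]
      abel
    · intro r _ hr
      have hr1 : 1 ≤ r := Nat.one_le_iff_ne_zero.2 hr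
      have e1 : ((m : ℤ) + 1 - ((r : ℤ) + 1)) = m - r := by ring
      have e2 : (n + ((r : ℤ) + 1)) = (n + 1) + r := by ring
      rw [e1, e2, smul_smul, hgr r hr1, hgr (r + 1) (by omega)]
      have e3 : q ^ 2 * ((q ^ 4 - 1) * q ^ (2 * (r - 1))) = (q ^ 4 - 1) * q ^ (2 * (r + 1 - 1)) := by
        have : 2 * (r + 1 - 1) = 2 * (r - 1) + 2 := by omega
        rw [this, pow_add]
        ring
      rw [e3, sub_self]
  rw [Finset.sum_sub_distrib] at key
  have hδ : (if (m : ℤ) + 1 = -n then v else 0) = (if m = -n - 1 then v else 0) := by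
    by_cases h : m = -n - 1
    · rw [if_pos h, if_pos (by omega)]
    · rw [if_neg h, if_neg (by omega)]
  have hδ2 : (if m = -(n + 1) then v else 0) = (if m = -n - 1 then v else 0) := by
    by_cases h : m = -n - 1
    · rw [if_pos h, if_pos (by omega)]
    · rw [if_neg h, if_neg (by omega)]
  rw [hδ, hδ2, hg0]
  simp only [Nat.cast_zero, add_zero, sub_zero] at *
  rw [← key]
  have : ((m : ℤ) + 1 - 0) = m + 1 := by ring
  rw [sub_smul, one_smul]
  abel
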